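/- Let Γ be the 2-dimensional crystallographic group generated by the translations t₁ = e₁+I, t₂ = e₂+I and γ = (1/2)e₁ + B where B = diag(1,−1) (the Klein bottle group pg). Then N = ⟨t₁⟩ is a complete normal subgroup of Γ with Γ/N infinite dihedral, and the extension 1 → N → Γ → Γ/N → 1 does not split. -/

import Mathlib

noncomputable section

/-- Euclidean `n`-space. -/
abbrev E (n : ℕ) := EuclideanSpace ℝ (Fin n)

/-- An isometry `a + A` of `E n`, acting by `x ↦ a + A x`, with `A` a linear isometry
(an element of `O(n)`). -/
@[ext] structure Iso (n : ℕ) where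
  a : E n
  A : E n ≃ₗᵢ[ℝ] E n

namespace Iso

variable {n : ℕ}

instance : Mul (Iso n) := ⟨fun x y => ⟨x.a + x.A y.a, y.A.trans x.A⟩⟩
instance : One (Iso n) := ⟨⟨0, LinearIsometryEquiv.refl ℝ (E n)⟩⟩
instance : Inv (Iso n) := ⟨fun x => ⟨-(x.A.symm x.a), x.A.symm⟩⟩

@[simp] lemma mul_a (x y : Iso n) : (x * y).a = x.a + x.A y.a := rfl
@[simp] lemma mul_A (x y : Iso n) : (x * y).A = y.A.trans x.A := rfl
@[simp] lemma one_a : (1 : Iso n).a = 0 := rfl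
@[simp] lemma one_A : (1 : Iso n).A = LinearIsometryEquiv.refl ℝ (E n) := rfl
@[simp] lemma inv_a (x : Iso n) : (x⁻¹).a = -(x.A.symm x.a) := rfl
@[simp] lemma inv_A (x : Iso n) : (x⁻¹).A = x.A.symm := rfl

/-- The group of isometries of `E n`, with composition as multiplication. -/
instance : Group (Iso n) where
  mul_assoc x y z := by
    refine Iso.ext ?_ ?_
    · simp [add_assoc]
    · ext v; simp
  one_mul x := by refine Iso.ext ?_ ?_ <;> simp
  mul_one x := by refine Iso.ext ?_ ?_ <;> simp
  inv_mul_cancel x := by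
    refine Iso.ext ?_ ?_
    · simp
    · ext v; simp

/-- The action of the isometry `a + A` on a point `x` of `E n`: `x ↦ a + A x`. -/
def act (g : Iso n) (x : E n) : E n := g.a + g.A x

/-- The translation `a + I`. -/
def trans (a : E n) : Iso n := ⟨a, LinearIsometryEquiv.refl ℝ (E n)⟩

/-- `g` is a translation if its linear part is the identity. -/
def IsTranslation (g : Iso n) : Prop := g.A = LinearIsometryEquiv.refl ℝ (E n)

/-- The subgroup of all translations of `E n`. -/
def translations (n : ℕ) : Subgroup (Iso n) where
  carrier := {g | g.IsTranslation}
  mul_mem' := by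
    intro x y hx hy
    simp only [Set.mem_setOf_eq, IsTranslation] at *
    rw [mul_A, hx, hy]; simp
  one_mem' := rfl
  inv_mem' := by
    intro x hx
    simp only [Set.mem_setOf_eq, IsTranslation] at *
    rw [inv_A, hx]; rfl

/-- The set of translation vectors of a set `S` of isometries:
`{a : E n | a + I ∈ S}`. -/
def transVecs (S : Set (Iso n)) : Set (E n) := {a | Iso.trans a ∈ S}

/-- `Span(S)`: the real linear span of the translation vectors of `S`. -/
def spanS (S : Set (Iso n)) : Submodule ℝ (E n) :=
  Submodule.span ℝ (transVecs S)

/-- A crystallographic (space) group: a group of isometries of `E n` that acts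
properly discontinuously (equivalently, is discrete) and cocompactly. -/
def IsCrystallographic (Γ : Subgroup (Iso n)) : Prop :=
  (∀ K : Set (E n), IsCompact K →
      {g : Iso n | g ∈ Γ ∧ ((Iso.act g '' K) ∩ K).Nonempty}.Finite) ∧
  ∃ K : Set (E n), IsCompact K ∧ ∀ x : E n, ∃ g ∈ Γ, g.act x ∈ K

/-- `N` is a normal subgroup of `Γ`. -/
def IsNormalIn (N Γ : Subgroup (Iso n)) : Prop :=
  N ≤ Γ ∧ ∀ g ∈ Γ, ∀ x ∈ N, g * x * g⁻¹ ∈ N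

/-- The completion of `S` in `Γ`:
`S̄ = {b+B ∈ Γ : b ∈ Span(S) and Span(S)ᗮ ⊆ Fix(B)}`. -/
def completion (Γ : Subgroup (Iso n)) (S : Set (Iso n)) : Set (Iso n) :=
  {g | g ∈ Γ ∧ g.a ∈ spanS S ∧ ∀ x ∈ (spanS S)ᗮ, g.A x = x}

end Iso

/-- The standard basis vector `e₁` of `E 2`. -/
def e₁ : E 2 := EuclideanSpace.single (0 : Fin 2) (1 : ℝ)

/-- The standard basis vector `e₂` of `E 2`. -/
def e₂ : E 2 := EuclideanSpace.single (1 : Fin 2) (1 : ℝ)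

/-- The reflection `B = diag(1,−1)`: the reflection of `E 2` through `span{e₁}`. -/
def B₂ : E 2 ≃ₗᵢ[ℝ] E 2 := Submodule.reflection (Submodule.span ℝ {e₁})

/-- The translation `t₁ = e₁ + I`. -/
def t₁ : Iso 2 := Iso.trans e₁

/-- The translation `t₂ = e₂ + I`. -/
def t₂ : Iso 2 := Iso.trans e₂

/-- The glide reflection `γ = (1/2)e₁ + B`. -/
def γ₀ : Iso 2 := ⟨(2⁻¹ : ℝ) • e₁, B₂⟩

/-- The Klein bottle group `pg`: `Γ = ⟨t₁, t₂, γ⟩`. -/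
def Γpg : Subgroup (Iso 2) := Subgroup.closure {t₁, t₂, γ₀}

/-- `N = ⟨t₁⟩`. -/
def Npg : Subgroup (Iso 2) := Subgroup.zpowers t₁

/-!
Every element of `Γ` is uniquely `(k/2) e₁ + q e₂ + Bᵏ` with `k q : ℤ`, and these multiply as
`(k, q) (k', q') = (k + k', q + (-1)ᵏ q')`; in these coordinates `N = {(2j, 0)}`. Since `sr 0`
inverts `r 1` in `D∞`, the map `(k, q) ↦ (r 1)^q (sr 0)^k` is a surjective homomorphism whose
kernel is `N`, which also gives normality. No element of `Γ` other than `1` squares to `1`, whereas `γ ∉ N`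
and `γ² = t₁ ∈ N`: for a complement `S`, the `s ∈ S` with `γ ∈ N s` has `s² ∈ S ∩ N = 1`, so
`s = 1` and `γ ∈ N`.
-/

theorem SemiconjBy.zpow_left_of_inv {G : Type*} [Group G] {a b : G} (h : SemiconjBy b a a⁻¹)
    (k : ℤ) : SemiconjBy (b ^ k) a (a ^ (k.negOnePow : ℤ)) := by
  have hsq : Commute (b ^ (2 : ℤ)) a := by
    have h' : SemiconjBy b a⁻¹ a := by simpa using h.inv_right
    rw [zpow_two]
    exact h'.mul_left h
  obtain ⟨j, rfl | rfl⟩ := Int.even_or_odd' k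
  · rw [Int.negOnePow_two_mul, zpow_mul, Units.val_one, zpow_one]
    exact hsq.zpow_left j
  · rw [Int.negOnePow_two_mul_add_one, zpow_add_one, zpow_mul, Units.val_neg, Units.val_one,
      zpow_neg_one]
    have hc : SemiconjBy ((b ^ (2 : ℤ)) ^ j) a⁻¹ a⁻¹ := (hsq.zpow_left j).inv_right
    exact hc.mul_left h

theorem zpow_mul_zpow_of_semiconjBy_inv {G : Type*} [Group G] {a b : G}
    (h : SemiconjBy b a a⁻¹) (k q : ℤ) :
    b ^ k * a ^ q = a ^ ((k.negOnePow : ℤ) * q) * b ^ k := by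
  rw [zpow_mul]
  exact ((h.zpow_left_of_inv k).zpow_right q).eq

theorem eq_zpow_of_map_add {G : Type*} [Group G] {φ : ℤ → G}
    (h : ∀ a b, φ (a + b) = φ a * φ b) (m : ℤ) : φ m = φ 1 ^ m :=
  MonoidHom.apply_mint (f := MonoidHom.mk' (φ ∘ Multiplicative.toAdd) fun a b => h a.toAdd b.toAdd)
    (n := Multiplicative.ofAdd m)

namespace Iso

variable {n : ℕ}

theorem isNormalIn_of_ker {G : Type*} [Group G] {N Γ : Subgroup (Iso n)} (hNΓ : N ≤ Γ)
    (f : Γ →* G) (hf : ∀ g : Γ, f g = 1 ↔ (g : Iso n) ∈ N) : IsNormalIn N Γ := by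
  refine ⟨hNΓ, fun g hg x hx => (hf (⟨g, hg⟩ * ⟨x, hNΓ hx⟩ * ⟨g, hg⟩⁻¹)).mp ?_⟩
  rw [map_mul, map_mul, (hf ⟨x, hNΓ hx⟩).mpr hx, mul_one, map_inv, mul_inv_cancel]

theorem subset_completion {Γ : Subgroup (Iso n)} {S : Set (Iso n)} (hSΓ : S ⊆ Γ)
    (hS : S ⊆ translations n) : S ⊆ completion Γ S := by
  intro g hg
  have hA : g.A = LinearIsometryEquiv.refl ℝ (E n) := hS hg
  have hg' : trans g.a ∈ S := by
    convert hg
    ext1 <;> simp [trans, hA]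
  exact ⟨hSΓ hg, Submodule.subset_span hg', fun x _ => by simp [hA]⟩

theorem not_exists_complement {Γ N : Subgroup (Iso n)} (hN : IsNormalIn N Γ)
    (hΓ : ∀ g ∈ Γ, g * g = 1 → g = 1) {γ : Iso n} (hγΓ : γ ∈ Γ) (hγN : γ ∉ N)
    (hγγ : γ * γ ∈ N) :
    ¬ ∃ S : Subgroup (Iso n), S ≤ Γ ∧ S ⊓ N = ⊥ ∧ ∀ g ∈ Γ, ∃ x ∈ N, ∃ s ∈ S, g = x * s := by
  rintro ⟨S, hSΓ, hSN, hsplit⟩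
  obtain ⟨x, hx, s, hs, rfl⟩ := hsplit γ hγΓ
  have hss : s * s ∈ N := by
    have h : s * s = x⁻¹ * (x * s * x⁻¹ * (x * s)⁻¹) * (x * s * (x * s)) := by group
    rw [h]
    exact mul_mem (mul_mem (inv_mem hx) (hN.2 _ hγΓ _ (inv_mem hx))) hγγ
  have hs1 : s * s = 1 := by
    rw [← Subgroup.mem_bot, ← hSN]
    exact ⟨mul_mem hs hs, hss⟩
  rw [hΓ s (hSΓ hs) hs1, mul_one] at hγN
  exact hγN hx

end Iso

namespace DihedralGroup

theorem sr_zero_semiconjBy_r_one : SemiconjBy (sr 0 : DihedralGroup 0) (r 1) (r 1)⁻¹ := by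
  simp [SemiconjBy, sr_mul_r, r_mul_sr, inv_r]

theorem r_one_zpow_mul_sr_zero_zpow_mul (k q k' q' : ℤ) :
    r 1 ^ q * sr 0 ^ k * (r 1 ^ q' * sr 0 ^ k') =
      (r 1 ^ (q + k.negOnePow * q') * sr 0 ^ (k + k') : DihedralGroup 0) := by
  rw [mul_assoc, ← mul_assoc (sr 0 ^ k),
    zpow_mul_zpow_of_semiconjBy_inv sr_zero_semiconjBy_r_one, zpow_add, zpow_add]
  group

theorem r_one_zpow_mul_sr_zero_zpow_eq_one_iff {k q : ℤ} :
    (r 1 ^ q * sr 0 ^ k : DihedralGroup 0) = 1 ↔ Even k ∧ q = 0 := by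
  have hsq : (sr 0 : DihedralGroup 0) ^ (2 : ℤ) = 1 := by rw [zpow_two, sr_mul_self]
  obtain ⟨j, rfl | rfl⟩ := Int.even_or_odd' k
  · rw [zpow_mul, hsq, one_zpow, mul_one, r_one_zpow, ← r_zero, r.injEq]
    simp
  · rw [zpow_add_one, zpow_mul, hsq, one_zpow, one_mul, r_one_zpow, r_mul_sr]
    exact iff_of_false (fun h => by cases h) (by simp)

theorem exists_r_one_zpow_mul_sr_zero_zpow_eq (x : DihedralGroup 0) :
    ∃ k q : ℤ, r 1 ^ q * sr 0 ^ k = x := by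
  rcases x with i | i <;> obtain ⟨q, rfl⟩ : ∃ q : ℤ, (q : ZMod 0) = i := ⟨i, rfl⟩
  · exact ⟨0, q, by rw [zpow_zero, mul_one, r_one_zpow]; rfl⟩
  · exact ⟨1, -q, by rw [zpow_one, r_one_zpow, r_mul_sr, Int.cast_neg, zero_sub, neg_neg]; rfl⟩

end DihedralGroup

open DihedralGroup

theorem B₂_e₁ : B₂ e₁ = e₁ :=
  Submodule.reflection_mem_subspace_eq_self (Submodule.mem_span_singleton_self _)

theorem e₂_mem_span_e₁_orthogonal : e₂ ∈ (Submodule.span ℝ {e₁})ᗮ := by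
  rw [Submodule.mem_orthogonal_singleton_iff_inner_right]
  simp [e₁, e₂, EuclideanSpace.inner_single_left]

theorem B₂_e₂ : B₂ e₂ = -e₂ :=
  Submodule.reflection_mem_subspace_orthogonalComplement_eq_neg e₂_mem_span_e₁_orthogonal

theorem B₂_mul_self : B₂ * B₂ = 1 :=
  LinearIsometryEquiv.ext fun x => Submodule.reflection_reflection (Submodule.span ℝ {e₁}) x

theorem B₂_zpow_apply (k : ℤ) (x y : ℝ) :
    (B₂ ^ k) (x • e₁ + y • e₂) = x • e₁ + ((k.negOnePow : ℤ) * y : ℝ) • e₂ := by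
  have hsq : B₂ ^ (2 : ℤ) = 1 := by rw [zpow_two, B₂_mul_self]
  obtain ⟨j, rfl | rfl⟩ := Int.even_or_odd' k
  · simp [zpow_mul, hsq]
  · simp [zpow_add_one, zpow_mul, hsq, B₂_e₁, B₂_e₂]

theorem B₂_zpow_e₂ (k : ℤ) : (B₂ ^ k) e₂ = ((k.negOnePow : ℤ) : ℝ) • e₂ := by
  simpa using B₂_zpow_apply k 0 1

def pgElt (k q : ℤ) : Iso 2 := ⟨((k : ℝ) / 2) • e₁ + (q : ℝ) • e₂, B₂ ^ k⟩

theorem pgElt_mul (k q k' q' : ℤ) :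
    pgElt k q * pgElt k' q' = pgElt (k + k') (q + k.negOnePow * q') := by
  refine Iso.ext ?_ (zpow_add B₂ k k').symm
  simp only [pgElt, Iso.mul_a, B₂_zpow_apply]
  push_cast
  module

theorem pgElt_zero_zero : pgElt 0 0 = 1 := by
  ext1
  · simp [pgElt]
  · exact zpow_zero B₂

theorem pgElt_inv (k q : ℤ) : (pgElt k q)⁻¹ = pgElt (-k) (-(k.negOnePow * q)) := by
  rw [inv_eq_iff_mul_eq_one, pgElt_mul, ← pgElt_zero_zero, mul_neg, ← mul_assoc,
    Int.units_coe_mul_self]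
  congr 1 <;> ring

theorem pgElt_a_zero (k q : ℤ) : (pgElt k q).a 0 = k / 2 := by simp [pgElt, e₁, e₂]

theorem pgElt_a_one (k q : ℤ) : (pgElt k q).a 1 = q := by simp [pgElt, e₁, e₂]

theorem pgElt_inj {k q k' q' : ℤ} : pgElt k q = pgElt k' q' ↔ k = k' ∧ q = q' := by
  refine ⟨fun h => ?_, by rintro ⟨rfl, rfl⟩; rfl⟩
  have h0 := congrArg (fun g : Iso 2 => g.a 0) h
  have h1 := congrArg (fun g : Iso 2 => g.a 1) h
  simp only [pgElt_a_zero, pgElt_a_one] at h0 h1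
  exact ⟨by exact_mod_cast (div_left_inj' two_ne_zero).mp h0, by exact_mod_cast h1⟩

theorem t₁_eq_pgElt : t₁ = pgElt 2 0 := by
  ext1
  · simp [t₁, Iso.trans, pgElt]
  · rw [pgElt, zpow_two, B₂_mul_self]
    rfl

theorem t₂_eq_pgElt : t₂ = pgElt 0 1 := by
  ext1
  · simp [t₂, Iso.trans, pgElt]
  · exact (zpow_zero B₂).symm

theorem γ₀_eq_pgElt : γ₀ = pgElt 1 0 := by
  ext1 <;> simp [γ₀, pgElt]

theorem t₁_zpow (m : ℤ) : t₁ ^ m = pgElt (2 * m) 0 := by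
  rw [t₁_eq_pgElt, eq_zpow_of_map_add (φ := fun m => pgElt (2 * m) 0) _ m]
  · simp
  · intro a b
    simp [pgElt_mul, mul_add]

theorem t₂_zpow (q : ℤ) : t₂ ^ q = pgElt 0 q := by
  rw [t₂_eq_pgElt, eq_zpow_of_map_add (φ := pgElt 0) _ q]
  intro a b
  simp [pgElt_mul]

theorem γ₀_zpow (k : ℤ) : γ₀ ^ k = pgElt k 0 := by
  rw [γ₀_eq_pgElt, eq_zpow_of_map_add (φ := fun k => pgElt k 0) _ k]
  intro a b
  simp [pgElt_mul]

theorem mem_Γpg_iff {g : Iso 2} : g ∈ Γpg ↔ ∃ k q : ℤ, pgElt k q = g := by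
  constructor
  · intro hg
    induction hg using Subgroup.closure_induction with
    | mem x hx =>
      rcases hx with rfl | rfl | rfl
      exacts [⟨2, 0, t₁_eq_pgElt.symm⟩, ⟨0, 1, t₂_eq_pgElt.symm⟩, ⟨1, 0, γ₀_eq_pgElt.symm⟩]
    | one => exact ⟨0, 0, pgElt_zero_zero⟩
    | mul x y _ _ hx hy =>
      obtain ⟨⟨k, q, rfl⟩, ⟨k', q', rfl⟩⟩ := And.intro hx hy
      exact ⟨_, _, (pgElt_mul k q k' q').symm⟩
    | inv x _ hx =>
      obtain ⟨k, q, rfl⟩ := hx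
      exact ⟨_, _, (pgElt_inv k q).symm⟩
  · rintro ⟨k, q, rfl⟩
    have h : pgElt k q = t₂ ^ q * γ₀ ^ k := by
      rw [t₂_zpow, γ₀_zpow, pgElt_mul]
      simp
    rw [h]
    exact mul_mem (zpow_mem (Subgroup.subset_closure (by simp)) q)
      (zpow_mem (Subgroup.subset_closure (by simp)) k)

theorem pgElt_mem_Npg_iff {k q : ℤ} : pgElt k q ∈ Npg ↔ Even k ∧ q = 0 := by
  rw [Npg, Subgroup.mem_zpowers_iff]
  constructor
  · rintro ⟨m, hm⟩
    obtain ⟨rfl, rfl⟩ := pgElt_inj.mp ((t₁_zpow m).symm.trans hm)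
    exact ⟨even_two_mul m, rfl⟩
  · rintro ⟨⟨j, rfl⟩, rfl⟩
    exact ⟨j, by rw [t₁_zpow, two_mul]⟩

theorem Γpg_mul_self_eq_one {g : Iso 2} (hg : g ∈ Γpg) (h : g * g = 1) : g = 1 := by
  obtain ⟨k, q, rfl⟩ := mem_Γpg_iff.mp hg
  rw [pgElt_mul, ← pgElt_zero_zero, pgElt_inj] at h
  obtain rfl : k = 0 := by omega
  obtain rfl : q = 0 := by simpa [← two_mul] using h.2
  exact pgElt_zero_zero

theorem Npg_le_Γpg : Npg ≤ Γpg := Subgroup.zpowers_le.mpr (Subgroup.subset_closure (by simp))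

theorem Npg_le_translations : Npg ≤ Iso.translations 2 := Subgroup.zpowers_le.mpr rfl

theorem spanS_Npg_le : Iso.spanS (Npg : Set (Iso 2)) ≤ Submodule.span ℝ {e₁} := by
  rw [Iso.spanS, Submodule.span_le]
  intro a ha
  obtain ⟨m, hm⟩ := Subgroup.mem_zpowers_iff.mp ha
  rw [t₁_zpow] at hm
  obtain rfl : (pgElt (2 * m) 0).a = a := congrArg Iso.a hm
  simpa [pgElt] using Submodule.smul_mem _ (m : ℝ) (Submodule.mem_span_singleton_self e₁)

theorem completion_Γpg_Npg : Iso.completion Γpg (Npg : Set (Iso 2)) = Npg := by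
  refine subset_antisymm ?_ (Iso.subset_completion Npg_le_Γpg Npg_le_translations)
  rintro _ ⟨hg, ha, hA⟩
  obtain ⟨k, q, rfl⟩ := mem_Γpg_iff.mp hg
  rw [SetLike.mem_coe, pgElt_mem_Npg_iff]
  obtain ⟨c, hc⟩ := Submodule.mem_span_singleton.mp (spanS_Npg_le ha)
  have hq : (0 : ℝ) = q := by
    simpa [e₁, pgElt_a_one] using congrArg (· 1) hc
  have he₂ : (pgElt k q).A e₂ = e₂ :=
    hA e₂ (Submodule.orthogonal_le spanS_Npg_le e₂_mem_span_e₁_orthogonal)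
  rw [pgElt, B₂_zpow_e₂] at he₂
  have hk : ((k.negOnePow : ℤ) : ℝ) = 1 :=
    smul_left_injective ℝ (by simp [e₂]) (he₂.trans (one_smul ℝ e₂).symm)
  rw [Int.cast_eq_one, Units.val_eq_one, Int.negOnePow_eq_one_iff] at hk
  exact ⟨hk, by exact_mod_cast hq.symm⟩

/-- The floors are exact on `Γpg`, where `g.a = (k/2) e₁ + q e₂` with `k q : ℤ`
(`toDinf_pgElt`); off `Γpg` the value is meaningless. -/
def toDinf (g : Iso 2) : DihedralGroup 0 := r 1 ^ ⌊g.a 1⌋ * sr 0 ^ ⌊2 * g.a 0⌋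

theorem toDinf_pgElt (k q : ℤ) : toDinf (pgElt k q) = r 1 ^ q * sr 0 ^ k := by
  simp [toDinf, pgElt_a_zero, pgElt_a_one, mul_div_cancel₀]

def pgToDinf : Γpg →* DihedralGroup 0 :=
  MonoidHom.mk' (fun g => toDinf g) <| by
    rintro ⟨_, hg⟩ ⟨_, hh⟩
    obtain ⟨⟨k, q, rfl⟩, ⟨k', q', rfl⟩⟩ := And.intro (mem_Γpg_iff.mp hg) (mem_Γpg_iff.mp hh)
    change toDinf (pgElt k q * pgElt k' q') = toDinf (pgElt k q) * toDinf (pgElt k' q')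
    rw [pgElt_mul, toDinf_pgElt, toDinf_pgElt, toDinf_pgElt, r_one_zpow_mul_sr_zero_zpow_mul]

theorem pgToDinf_surjective : Function.Surjective pgToDinf := by
  intro x
  obtain ⟨k, q, rfl⟩ := exists_r_one_zpow_mul_sr_zero_zpow_eq x
  exact ⟨⟨pgElt k q, mem_Γpg_iff.mpr ⟨k, q, rfl⟩⟩, toDinf_pgElt k q⟩

theorem pgToDinf_eq_one_iff (g : Γpg) : pgToDinf g = 1 ↔ (g : Iso 2) ∈ Npg := by
  obtain ⟨_, hg⟩ := g
  obtain ⟨k, q, rfl⟩ := mem_Γpg_iff.mp hg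
  change toDinf (pgElt k q) = 1 ↔ _
  rw [toDinf_pgElt, r_one_zpow_mul_sr_zero_zpow_eq_one_iff, pgElt_mem_Npg_iff]

/-- For the Klein bottle group `Γ = ⟨t₁, t₂, γ⟩` (`pg`),
`N = ⟨t₁⟩` is a complete normal subgroup of `Γ`, `Γ/N` is infinite dihedral
(there is a surjection `Γ → D∞` with kernel `N`), and the extension
`1 → N → Γ → Γ/N → 1` does not split (no subgroup of `Γ` meeting `N` trivially
together with `N` generates all of `Γ` by products `x·s`). -/
theorem stmt19 :
    Iso.IsNormalIn Npg Γpg ∧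
    Iso.completion Γpg (Npg : Set (Iso 2)) = (Npg : Set (Iso 2)) ∧
    (∃ f : ↥Γpg →* DihedralGroup 0, Function.Surjective f ∧
      ∀ g : ↥Γpg, f g = 1 ↔ (g : Iso 2) ∈ Npg) ∧
    ¬ ∃ S : Subgroup (Iso 2), S ≤ Γpg ∧ S ⊓ Npg = ⊥ ∧
        ∀ g ∈ Γpg, ∃ x ∈ Npg, ∃ s ∈ S, g = x * s := by
  have hN : Iso.IsNormalIn Npg Γpg :=
    Iso.isNormalIn_of_ker Npg_le_Γpg pgToDinf pgToDinf_eq_one_iff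
  have hγ₀ : γ₀ ∈ Γpg := mem_Γpg_iff.mpr ⟨1, 0, γ₀_eq_pgElt.symm⟩
  have hγ₀N : γ₀ ∉ Npg := by simp [γ₀_eq_pgElt, pgElt_mem_Npg_iff]
  have hγ₀γ₀ : γ₀ * γ₀ ∈ Npg := by simp [γ₀_eq_pgElt, pgElt_mul, pgElt_mem_Npg_iff]
  exact ⟨hN, completion_Γpg_Npg, ⟨pgToDinf, pgToDinf_surjective, pgToDinf_eq_one_iff⟩,
    Iso.not_exists_complement hN (fun _ => Γpg_mul_self_eq_one) hγ₀ hγ₀N hγ₀γ₀⟩
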